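/- arXiv:1809.08794 — 2 statements merged into one kernel-verified Lean document; each statement's English description precedes it below -/
import Mathlib

section
/- Let a, c, ε, λ be real numbers with c+λ > 0, and let 0 < x < 1. Then F_3(λ;x) = (A_1·A_2 + B_2)·F_1(λ;x) + A_2·B_1, where A_1 := −(λ(1−εx) + c − 2 + (1−a)x)/(1−x), B_1 := (λ + c − 1)/(1−x), A_2 := −(λ(1−εx) + c − 4 + (2−a)x)/(2(1−x)) and B_2 := (λ + c − 2)/(2(1−x)). Here F_m(λ;x) denotes the convergent series Σ_{n=0}^∞ (a+ελ)_n·(m)_n/((c+λ)_n·n!)·x^n. -/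
/-!
Write `t^β_n` for the `n`-th term of `F(α, β; γ; x)`. Gauss's contiguous relation
`β (1 - x) F(β + 1) = (2β - γ + (α - β) x) F(β) + (γ - β) F(β - 1)` comes from telescoping
`P n = (n + γ - 1) (t^β_n - t^{β-1}_n)`: on one hand `P (n + 1) = (α + n) x t^β_n`, on the other
`n t^β_n = β (t^{β+1}_n - t^β_n)`, and `P 0 = 0`. Taking `β = 1` (where `F(0) = 1`) and `β = 2`
and eliminating `F_2` gives the theorem.
-/

open Real

/-- The Pochhammer symbol (rising factorial) (q)_n for real q. -/
noncomputable def poch (q : ℝ) (n : ℕ) : ℝ := (ascPochhammer ℝ n).eval q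

/-- F_m(λ;x) := Σ_{n=0}^∞ (a+ελ)_n·(m)_n/((c+λ)_n·n!)·x^n, the Gauss
    hypergeometric function F(a+ελ, m; c+λ; x). -/
noncomputable def Fm (a c ε lam x m : ℝ) : ℝ :=
  ∑' n : ℕ, poch (a + ε * lam) n * poch m n / (poch (c + lam) n * (Nat.factorial n : ℝ)) * x ^ n

open Filter Topology

lemma poch_succ (q : ℝ) (n : ℕ) : poch q (n + 1) = poch q n * (q + n) :=
  ascPochhammer_succ_eval n q

lemma poch_succ_eq_mul_poch_add_one (q : ℝ) (n : ℕ) : poch q (n + 1) = q * poch (q + 1) n := by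
  simp [poch, ascPochhammer_succ_left, Polynomial.eval_comp]

lemma poch_zero (q : ℝ) : poch q 0 = 1 := by simp [poch]

lemma poch_zero_left {n : ℕ} (hn : n ≠ 0) : poch 0 n = 0 := by
  simp [poch, hn]

lemma poch_pos {q : ℝ} (hq : 0 < q) (n : ℕ) : 0 < poch q n :=
  ascPochhammer_pos n q hq

/-- The `n`-th term of the series of `F(α, β; γ; x)`; `Fm a c ε lam x m` sums it with
`α = a + ε λ`, `β = m`, `γ = c + λ`. -/
noncomputable def hypergeometricTerm (α β γ x : ℝ) (n : ℕ) : ℝ :=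
  poch α n * poch β n / (poch γ n * (Nat.factorial n : ℝ)) * x ^ n

namespace hypergeometricTerm

variable {α γ x : ℝ}

lemma zero_right (α β γ x : ℝ) : hypergeometricTerm α β γ x 0 = 1 := by
  simp [hypergeometricTerm, poch_zero]

lemma succ (β : ℝ) (hγ : 0 < γ) (n : ℕ) :
    hypergeometricTerm α β γ x (n + 1) =
      hypergeometricTerm α β γ x n * ((α + n) * (β + n) * x / ((γ + n) * (n + 1))) := by
  have := (poch_pos hγ n).ne'
  have : (0 : ℝ) < γ + n := by positivity
  simp only [hypergeometricTerm, poch_succ, Nat.factorial_succ, Nat.cast_mul, pow_succ]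
  push_cast
  field_simp

lemma tendsto_abs_ratio (α β γ x : ℝ) :
    Tendsto (fun n : ℕ => |α + n| * |β + n| * |x| / ((γ + n) * (n + 1))) atTop (𝓝 |x|) := by
  have hα : Tendsto (fun n : ℕ => (α + 1 * n) / (γ + 1 * n)) atTop (𝓝 (1 / 1)) :=
    tendsto_add_mul_div_add_mul_atTop_nhds α γ 1 one_ne_zero
  have hβ : Tendsto (fun n : ℕ => (β + 1 * n) / (1 + 1 * n)) atTop (𝓝 (1 / 1)) :=
    tendsto_add_mul_div_add_mul_atTop_nhds β 1 1 one_ne_zero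
  have h := ((hα.mul hβ).abs).mul_const |x|
  simp only [one_mul, div_one, mul_one, abs_one] at h
  refine h.congr' ?_
  filter_upwards [eventually_gt_atTop (⌈-γ⌉₊)] with n hn
  have : 0 < γ + n := by
    have := Nat.lt_of_ceil_lt hn
    linarith
  rw [abs_mul, abs_div, abs_div, abs_of_pos this, abs_of_pos (by positivity : (0 : ℝ) < 1 + n)]
  field_simp
  ring

theorem summable (β : ℝ) (hγ : 0 < γ) (hx : |x| < 1) :
    Summable (hypergeometricTerm α β γ x) := by
  obtain ⟨r, hxr, hr⟩ := exists_between hx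
  refine summable_of_ratio_norm_eventually_le hr ?_
  filter_upwards [(tendsto_abs_ratio α β γ x).eventually_le_const hxr] with n hn
  have : 0 < γ + n := by positivity
  rw [succ β hγ, norm_mul, mul_comm, Real.norm_eq_abs (_ / _), abs_div, abs_mul, abs_mul,
    abs_of_pos (by positivity : (0 : ℝ) < (γ + n) * (n + 1))]
  exact mul_le_mul_of_nonneg_right hn (norm_nonneg _)

lemma natCast_mul (α β γ x : ℝ) (n : ℕ) :
    n * hypergeometricTerm α β γ x n =
      β * (hypergeometricTerm α (β + 1) γ x n - hypergeometricTerm α β γ x n) := by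
  have h := (poch_succ β n).symm.trans (poch_succ_eq_mul_poch_add_one β n)
  simp only [hypergeometricTerm]
  linear_combination poch α n / (poch γ n * n.factorial) * x ^ n * h

lemma add_mul_sub_pred_succ (β : ℝ) (hγ : 0 < γ) (n : ℕ) :
    (γ + n) * (hypergeometricTerm α β γ x (n + 1) - hypergeometricTerm α (β - 1) γ x (n + 1)) =
      (α + n) * x * hypergeometricTerm α β γ x n := by
  have h := poch_succ_eq_mul_poch_add_one (β - 1) n
  rw [sub_add_cancel] at h
  have := (poch_pos hγ n).ne'
  have : 0 < γ + n := by positivity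
  simp only [hypergeometricTerm, h]
  simp only [poch_succ, Nat.factorial_succ, Nat.cast_mul, pow_succ]
  push_cast
  field_simp
  ring

end hypergeometricTerm

noncomputable def hypergeometricSum (α β γ x : ℝ) : ℝ :=
  ∑' n, hypergeometricTerm α β γ x n

lemma hypergeometricSum_zero_middle (α γ x : ℝ) : hypergeometricSum α 0 γ x = 1 := by
  rw [hypergeometricSum, tsum_eq_single 0 fun n hn => by
    simp [hypergeometricTerm, poch_zero_left hn]]
  exact hypergeometricTerm.zero_right α 0 γ x

theorem hypergeometricSum_contiguous {α γ x : ℝ} (β : ℝ) (hγ : 0 < γ) (hx : |x| < 1) :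
    β * (1 - x) * hypergeometricSum α (β + 1) γ x =
      (2 * β - γ + (α - β) * x) * hypergeometricSum α β γ x +
        (γ - β) * hypergeometricSum α (β - 1) γ x := by
  set T := hypergeometricTerm α β γ x
  set U := hypergeometricTerm α (β + 1) γ x
  set L := hypergeometricTerm α (β - 1) γ x
  have hT : HasSum T _ := (hypergeometricTerm.summable β hγ hx).hasSum
  have hU : HasSum U _ := (hypergeometricTerm.summable (β + 1) hγ hx).hasSum
  have hL : HasSum L _ := (hypergeometricTerm.summable (β - 1) hγ hx).hasSum
  -- the relation is the telescoping identity `∑ P (n + 1) = ∑ P n` for this `P`, with `P 0 = 0`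
  set P : ℕ → ℝ := fun n => (n + γ - 1) * (T n - L n)
  have hP : HasSum P (β * ∑' n, U n + (γ - 2 * β) * ∑' n, T n + (β - γ) * ∑' n, L n) := by
    refine (((hU.mul_left β).add (hT.mul_left _)).add (hL.mul_left _)).congr_fun fun n => ?_
    have h := hypergeometricTerm.natCast_mul α β γ x n
    have hpred := hypergeometricTerm.natCast_mul α (β - 1) γ x n
    rw [sub_add_cancel] at hpred
    simp only [P]
    linear_combination h - hpred
  have hP_succ : HasSum (fun n => P (n + 1)) (x * β * ∑' n, U n + x * (α - β) * ∑' n, T n) := by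
    refine ((hU.mul_left _).add (hT.mul_left _)).congr_fun fun n => ?_
    have h := hypergeometricTerm.natCast_mul α β γ x n
    have hs := hypergeometricTerm.add_mul_sub_pred_succ (α := α) (x := x) β hγ n
    simp only [P, T, U, L]
    push_cast
    linear_combination hs + x * h
  have hP_zero : P 0 = 0 := by simp [P, T, L, hypergeometricTerm.zero_right]
  have := ((hasSum_nat_add_iff' 1).mpr hP).unique hP_succ
  simp only [Finset.range_one, Finset.sum_singleton, hP_zero] at this
  simp only [hypergeometricSum]
  linear_combination this

/-- The iterated contiguous relation F_3(λ;x) = (A_1·A_2 + B_2)·F_1(λ;x) + A_2·B_1 with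
    A_1 = −(λ(1−εx)+c−2+(1−a)x)/(1−x), B_1 = (λ+c−1)/(1−x),
    A_2 = −(λ(1−εx)+c−4+(2−a)x)/(2(1−x)), B_2 = (λ+c−2)/(2(1−x)). -/
theorem stmt_11 (a c ε lam x : ℝ) (hcl : 0 < c + lam) (hx0 : 0 < x) (hx1 : x < 1) :
    Fm a c ε lam x 3 =
      ((-((lam * (1 - ε * x) + c - 2 + (1 - a) * x) / (1 - x))) *
          (-((lam * (1 - ε * x) + c - 4 + (2 - a) * x) / (2 * (1 - x)))) +
        (lam + c - 2) / (2 * (1 - x))) * Fm a c ε lam x 1 +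
      (-((lam * (1 - ε * x) + c - 4 + (2 - a) * x) / (2 * (1 - x)))) *
        ((lam + c - 1) / (1 - x)) := by
  set F : ℝ → ℝ := fun m => hypergeometricSum (a + ε * lam) m (c + lam) x
  have hx : |x| < 1 := abs_lt.mpr ⟨by linarith, hx1⟩
  have h1x : 1 - x ≠ 0 := by linarith
  have h1 := hypergeometricSum_contiguous (α := a + ε * lam) 1 hcl hx
  have h2 := hypergeometricSum_contiguous (α := a + ε * lam) 2 hcl hx
  rw [one_add_one_eq_two, sub_self, hypergeometricSum_zero_middle] at h1
  rw [show (2 : ℝ) + 1 = 3 by norm_num, show (2 : ℝ) - 1 = 1 by norm_num] at h2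
  have hF₂ : F 2 = ((2 - (c + lam) + (a + ε * lam - 1) * x) * F 1 + (c + lam - 1)) / (1 - x) :=
    eq_div_of_mul_eq h1x (by linear_combination h1)
  have hF₃ : F 3 = ((4 - (c + lam) + (a + ε * lam - 2) * x) * F 2 + (c + lam - 2) * F 1) /
      (2 * (1 - x)) :=
    eq_div_of_mul_eq (mul_ne_zero two_ne_zero h1x) (by linear_combination h2)
  change F 3 = _ * F 1 + _
  rw [hF₃, hF₂]
  field_simp
  ring
end

section
/- Let a, c ∈ ℝ, b > 0, ε > 1 and 0 < x < 1/ε. Then F_b(λ;x) := Σ_{n=0}^∞ (a+ελ)_n·(b)_n/((c+λ)_n·n!)·x^n tends to (1−εx)^{−b} as λ → +∞. -/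
open Real Filter

/-- F_b(λ;x) := Σ_{n=0}^∞ (a+ελ)_n·(b)_n/((c+λ)_n·n!)·x^n, the Gauss
    hypergeometric function F(a+ελ, b; c+λ; x). -/
noncomputable def Fb (a c ε lam x b : ℝ) : ℝ :=
  ∑' n : ℕ, poch (a + ε * lam) n * poch b n / (poch (c + lam) n * (Nat.factorial n : ℝ)) * x ^ n

/-!
The ratio `(a+ελ)_n / (c+λ)_n` is the product of the factors `(a+ελ+k)/(c+λ+k)`, each tending
to `ε`, so the `n`-th term of `F_b(λ;x)` tends to `(b)_n/n! (εx)^n`. Fix `M` with `ε < M < 1/x`.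
For large `λ` every factor lies in `[0, M]`, uniformly in `k` since `M ≥ 1`, so the terms are
dominated by `|(b)_n/n! (Mx)^n|`, which is summable because `|Mx| < 1`. Dominated convergence
for series gives the limit `Σ (b)_n/n! (εx)^n`, the binomial series of `(1-εx)^(-b)`.
-/

open Topology Finset
open scoped Nat

lemma poch_eq_prod (q : ℝ) (n : ℕ) : poch q n = ∏ k ∈ range n, (q + k) := by
  induction n with
  | zero => simp [poch]
  | succ n ih => rw [prod_range_succ, ← ih]; simp [poch, ascPochhammer_succ_right]

lemma tendsto_add_mul_div_add_atTop (p q ε : ℝ) :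
    Tendsto (fun lam : ℝ => (p + ε * lam) / (q + lam)) atTop (𝓝 ε) := by
  have hq : Tendsto (fun lam : ℝ => q + lam) atTop atTop :=
    tendsto_atTop_add_const_left _ _ tendsto_id
  have h0 : Tendsto (fun lam : ℝ => ε + (p - ε * q) / (q + lam)) atTop (𝓝 ε) := by
    simpa [div_eq_mul_inv] using (hq.inv_tendsto_atTop.const_mul (p - ε * q)).const_add ε
  refine h0.congr' ?_
  filter_upwards [hq.eventually_gt_atTop 0] with lam hlam
  field_simp
  ring

lemma tendsto_poch_div_poch_atTop (a c ε : ℝ) (n : ℕ) :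
    Tendsto (fun lam : ℝ => poch (a + ε * lam) n / poch (c + lam) n) atTop (𝓝 (ε ^ n)) := by
  simp_rw [poch_eq_prod, ← prod_div_distrib]
  rw [show ε ^ n = ∏ _k ∈ range n, ε by simp]
  refine tendsto_finsetProd _ fun k _ => ?_
  simpa only [add_right_comm] using tendsto_add_mul_div_add_atTop (a + k) (c + k) ε

lemma abs_poch_div_poch_le {p q M : ℝ} (hp : 0 ≤ p) (hq : 0 < q) (hM : 1 ≤ M) (hpq : p ≤ M * q)
    (n : ℕ) : |poch p n / poch q n| ≤ M ^ n := by
  rw [poch_eq_prod, poch_eq_prod, ← prod_div_distrib, abs_prod, ← card_range n, ← prod_const,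
    card_range]
  refine prod_le_prod (fun _ _ => abs_nonneg _) fun k _ => ?_
  have hk : (k : ℝ) ≤ M * k := le_mul_of_one_le_left k.cast_nonneg hM
  rw [abs_of_nonneg (by positivity), div_le_iff₀ (by positivity)]
  linarith

lemma eventually_abs_poch_div_poch_le (a c : ℝ) {ε M : ℝ} (hε : 0 < ε) (hεM : ε < M)
    (hM : 1 ≤ M) : ∀ᶠ lam in atTop, ∀ n, |poch (a + ε * lam) n / poch (c + lam) n| ≤ M ^ n := by
  have ha : Tendsto (fun lam : ℝ => a + ε * lam) atTop atTop :=
    tendsto_atTop_add_const_left _ _ (tendsto_id.const_mul_atTop hε)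
  filter_upwards [ha.eventually_ge_atTop 0, eventually_gt_atTop (-c),
    (tendsto_add_mul_div_add_atTop a c ε).eventually (gt_mem_nhds hεM)] with lam hpos hlam hlt
  exact abs_poch_div_poch_le hpos (by linarith) hM ((div_lt_iff₀ (by linarith)).1 hlt).le

lemma choose_eq_poch_div_factorial (b : ℝ) (n : ℕ) :
    Ring.choose (b + n - 1) n = poch b n / n ! := by
  rw [← Ring.multichoose_eq, eq_div_iff (by positivity), mul_comm, ← nsmul_eq_mul,
    Ring.factorial_nsmul_multichoose_eq_ascPochhammer, poch,
    Polynomial.ascPochhammer_smeval_eq_eval]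

lemma hasSum_poch_div_factorial_mul_pow (b : ℝ) {r : ℝ} (hr : |r| < 1) :
    HasSum (fun n => poch b n / n ! * r ^ n) ((1 - r) ^ (-b)) := by
  have h := (one_div_one_sub_rpow_hasFPowerSeriesOnBall_zero b).hasSum
    (y := r) (by simpa [enorm_eq_nnnorm, ← NNReal.coe_lt_coe] using hr)
  simpa [FormalMultilinearSeries.ofScalars_apply_eq, choose_eq_poch_div_factorial, mul_comm,
    rpow_neg (show 0 ≤ 1 - r by linarith [le_abs_self r])] using h

lemma summable_norm_poch_div_factorial_mul_pow (b : ℝ) {r : ℝ} (hr : |r| < 1) :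
    Summable (fun n => ‖poch b n / n ! * r ^ n‖) := by
  have h := one_div_one_sub_rpow_hasFPowerSeriesOnBall_zero b
  have := FormalMultilinearSeries.summable_norm_apply _
    (Metric.eball_subset_eball h.r_le (by simpa [enorm_eq_nnnorm, ← NNReal.coe_lt_coe] using hr))
  simpa [FormalMultilinearSeries.ofScalars_apply_eq, choose_eq_poch_div_factorial, mul_comm]
    using this

theorem stmt_12_general (a c b ε x : ℝ) (hε : 1 < ε) (hx0 : 0 < x) (hx1 : x < 1 / ε) :
    Tendsto (fun lam : ℝ => Fb a c ε lam x b) atTop (nhds ((1 - ε * x) ^ (-b))) := by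
  have hεx : ε < 1 / x := by rwa [lt_div_iff₀ hx0, mul_comm, ← lt_div_iff₀ (by linarith)]
  obtain ⟨M, hεM, hMx⟩ := exists_between hεx
  have habs {y : ℝ} (hy0 : 0 < y) (hy : y < 1 / x) : |y * x| < 1 := by
    rwa [abs_of_pos (by positivity), ← lt_div_iff₀ hx0]
  have hdom : ∀ᶠ lam in atTop, ∀ n, ‖poch (a + ε * lam) n * poch b n /
      (poch (c + lam) n * n !) * x ^ n‖ ≤ ‖poch b n / n ! * (M * x) ^ n‖ := by
    filter_upwards [eventually_abs_poch_div_poch_le a c (by linarith) hεM (by linarith)]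
      with lam hlam n
    rw [mul_div_mul_comm, mul_assoc, norm_mul, mul_pow, mul_left_comm, norm_mul (M ^ n),
      norm_pow, norm_of_nonneg (by linarith : 0 ≤ M)]
    exact mul_le_mul_of_nonneg_right (hlam n) (norm_nonneg _)
  have hterm (n : ℕ) : Tendsto (fun lam => poch (a + ε * lam) n * poch b n /
      (poch (c + lam) n * n !) * x ^ n) atTop (𝓝 (ε ^ n * (poch b n / n ! * x ^ n))) :=
    ((tendsto_poch_div_poch_atTop a c ε n).mul_const _).congr fun lam => by
      rw [mul_div_mul_comm, mul_assoc]
  have hsum : ∑' n : ℕ, ε ^ n * (poch b n / n ! * x ^ n) = (1 - ε * x) ^ (-b) := by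
    rw [← (hasSum_poch_div_factorial_mul_pow b (habs (by linarith) hεx)).tsum_eq]
    simp_rw [mul_pow, mul_left_comm (ε ^ _)]
  exact hsum ▸ tendsto_tsum_of_dominated_convergence
    (summable_norm_poch_div_factorial_mul_pow b (habs (by linarith) hMx)) hterm hdom

/-- For b > 0, ε > 1 and 0 < x < 1/ε, F_b(λ;x) → (1−εx)^{−b} as λ → +∞. -/
theorem stmt_12 (a c b ε x : ℝ) (hb : 0 < b) (hε : 1 < ε) (hx0 : 0 < x) (hx1 : x < 1 / ε) :
    Tendsto (fun lam : ℝ => Fb a c ε lam x b) atTop (nhds ((1 - ε * x) ^ (-b))) :=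
  stmt_12_general a c b ε x hε hx0 hx1
end
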